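/- arXiv:2205.03179 — 4 statements merged into one kernel-verified Lean document; each statement's English description precedes it below -/
import Mathlib

section
/- For real constants α < 0, β ≠ 0 and k = ζ + iη with η > 0, the functions A(x,t) = 4η·sech(2η(x + αt/(4|k|²)))·exp(iζ(−2x + αt/(2|k|²))) and B(x,t) = −(2αη²/(β|k|²))·sech(η(2x + αt/(2|k|²)))² satisfy A_{xt} − αA − βAB = 0 and B_x + (1/(2β))∂_t(|A|²) = 0. -/
/-!
Write `u = 2η x + (ηα / (2|k|²)) t` and `v = -2x + (α / (2|k|²)) t`, so that `A = 4η sech(u) e^{iζv}`.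
For a modulated wave `F(ax + bt) e^{ω(dx + et)}` the mixed derivative is
`(ab F'' + ω(ae + bd) F' + ω² de F) e^{ω(dx + et)}`; for the soliton `ae + bd = 0`, and
`sech'' = sech - 2 sech³` turns the first equation into `|k|² = ζ² + η²`.
In the second equation `B` and `|A|²` are both constant multiples of `sech²(u)`,
so their derivatives are multiples of `(sech²)'(u)` whose coefficients cancel.
-/

open Real

theorem hasDerivAt_one_div_cosh (y : ℝ) :
    HasDerivAt (fun y => 1 / cosh y) (-(sinh y / cosh y ^ 2)) y := by
  refine ((hasDerivAt_const y (1 : ℝ)).div (hasDerivAt_cosh y) (cosh_pos y).ne').congr_deriv ?_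
  ring

theorem hasDerivAt_sinh_div_cosh_sq (y : ℝ) :
    HasDerivAt (fun y => sinh y / cosh y ^ 2) (2 * (1 / cosh y) ^ 3 - 1 / cosh y) y := by
  refine ((hasDerivAt_sinh y).div ((hasDerivAt_cosh y).pow 2)
    (pow_ne_zero 2 (cosh_pos y).ne')).congr_deriv ?_
  have := (cosh_pos y).ne'
  simp only [Pi.pow_apply]
  field_simp
  linear_combination (-2 * cosh y) * sinh_sq y

theorem hasDerivAt_linear_fst (a b t x : ℝ) : HasDerivAt (fun x' => a * x' + b * t) a x := by
  simpa using ((hasDerivAt_id x).const_mul a).add_const (b * t)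

theorem hasDerivAt_linear_snd (a b x t : ℝ) : HasDerivAt (fun t' => a * x + b * t') b t := by
  simpa using ((hasDerivAt_id t).const_mul b).const_add (a * x)

theorem hasDerivAt_one_div_cosh_sq (y : ℝ) :
    HasDerivAt (fun y => (1 / cosh y) ^ 2) (-(2 * sinh y / cosh y ^ 3)) y := by
  refine ((hasDerivAt_one_div_cosh y).pow 2).congr_deriv ?_
  have := (cosh_pos y).ne'
  simp only [Nat.cast_ofNat, Nat.add_one_sub_one, pow_one]
  field_simp

theorem HasDerivAt.comp_linear_fst {h : ℝ → ℝ} {h' a b t x : ℝ}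
    (hh : HasDerivAt h h' (a * x + b * t)) :
    HasDerivAt (fun x' => h (a * x' + b * t)) (a * h') x :=
  (hh.comp x (hasDerivAt_linear_fst a b t x)).congr_deriv (mul_comm _ _)

theorem HasDerivAt.comp_linear_snd {h : ℝ → ℝ} {h' a b x t : ℝ}
    (hh : HasDerivAt h h' (a * x + b * t)) :
    HasDerivAt (fun t' => h (a * x + b * t')) (b * h') t :=
  (hh.comp t (hasDerivAt_linear_snd a b x t)).congr_deriv (mul_comm _ _)

theorem HasDerivAt.mul_cexp_ofReal {F : ℝ → ℂ} {u v : ℝ → ℝ} {F' : ℂ} {u' v' s : ℝ} (ω : ℂ)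
    (hF : HasDerivAt F F' (u s)) (hu : HasDerivAt u u' s) (hv : HasDerivAt v v' s) :
    HasDerivAt (fun s => F (u s) * Complex.exp (ω * v s))
      ((u' * F' + ω * v' * F (u s)) * Complex.exp (ω * v s)) s := by
  refine ((hF.scomp s hu).mul (hv.ofReal_comp.const_mul ω).cexp).congr_deriv ?_
  simp only [Function.comp_apply, Complex.real_smul]
  ring

section ModulatedWave

variable {F F' F'' : ℝ → ℂ} (ω : ℂ) (a b d e : ℝ)

theorem deriv_modulatedWave_fst (hF : ∀ y, HasDerivAt F (F' y) y) (x t : ℝ) :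
    deriv (fun x' => F (a * x' + b * t) * Complex.exp (ω * ↑(d * x' + e * t))) x =
      (a * F' (a * x + b * t) + ω * d * F (a * x + b * t)) *
        Complex.exp (ω * ↑(d * x + e * t)) :=
  ((hF _).mul_cexp_ofReal ω (hasDerivAt_linear_fst a b t x)
    (hasDerivAt_linear_fst d e t x)).deriv

theorem deriv_modulatedWave_snd (hF : ∀ y, HasDerivAt F (F' y) y) (x t : ℝ) :
    deriv (fun t' => F (a * x + b * t') * Complex.exp (ω * ↑(d * x + e * t'))) t =
      (b * F' (a * x + b * t) + ω * e * F (a * x + b * t)) *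
        Complex.exp (ω * ↑(d * x + e * t)) :=
  ((hF _).mul_cexp_ofReal ω (hasDerivAt_linear_snd a b x t)
    (hasDerivAt_linear_snd d e x t)).deriv

theorem deriv_deriv_modulatedWave (hF : ∀ y, HasDerivAt F (F' y) y)
    (hF' : ∀ y, HasDerivAt F' (F'' y) y) (x t : ℝ) :
    deriv (fun t' => deriv (fun x' =>
        F (a * x' + b * t') * Complex.exp (ω * ↑(d * x' + e * t'))) x) t =
      (a * b * F'' (a * x + b * t) + ω * (a * e + b * d) * F' (a * x + b * t)
        + ω ^ 2 * d * e * F (a * x + b * t)) * Complex.exp (ω * ↑(d * x + e * t)) := by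
  simp_rw [deriv_modulatedWave_fst ω a b d e hF x]
  rw [deriv_modulatedWave_snd ω a b d e (F := fun y => a * F' y + ω * d * F y)
    (fun y => ((hF' y).const_mul _).add ((hF y).const_mul _)) x t]
  ring

end ModulatedWave

noncomputable def abSolitonA (α ζ η x t : ℝ) : ℂ :=
  ((4 * η * (1 / cosh (2 * η * x + η * α / (2 * (ζ ^ 2 + η ^ 2)) * t)) : ℝ) : ℂ) *
    Complex.exp (Complex.I * ζ * ((-2 * x + α / (2 * (ζ ^ 2 + η ^ 2)) * t : ℝ) : ℂ))

noncomputable def abSolitonB (α β ζ η x t : ℝ) : ℝ :=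
  -(2 * α * η ^ 2 / (β * (ζ ^ 2 + η ^ 2))) *
    (1 / cosh (2 * η * x + η * α / (2 * (ζ ^ 2 + η ^ 2)) * t)) ^ 2

section Soliton

variable (α β ζ η : ℝ)

theorem abSoliton_first_equation (hK : ζ ^ 2 + η ^ 2 ≠ 0) (hβ : β ≠ 0) (x t : ℝ) :
    deriv (fun t' => deriv (fun x' => abSolitonA α ζ η x' t') x) t
      - α * abSolitonA α ζ η x t - β * abSolitonA α ζ η x t * abSolitonB α β ζ η x t = 0 := by
  unfold abSolitonA
  rw [deriv_deriv_modulatedWave (Complex.I * ζ) (2 * η) (η * α / (2 * (ζ ^ 2 + η ^ 2))) (-2)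
    (α / (2 * (ζ ^ 2 + η ^ 2)))
    (fun y => ((hasDerivAt_one_div_cosh y).const_mul (4 * η)).ofReal_comp)
    (fun y => ((hasDerivAt_sinh_div_cosh_sq y).neg.const_mul (4 * η)).ofReal_comp),
    abSolitonB]
  have hc := (cosh_pos (2 * η * x + η * α / (2 * (ζ ^ 2 + η ^ 2)) * t)).ne'
  generalize cosh (2 * η * x + η * α / (2 * (ζ ^ 2 + η ^ 2)) * t) = c at hc ⊢
  generalize sinh (2 * η * x + η * α / (2 * (ζ ^ 2 + η ^ 2)) * t) = s
  generalize Complex.exp _ = E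
  simp only [mul_pow, Complex.I_sq]
  push_cast
  have hc' : (c : ℂ) ≠ 0 := by exact_mod_cast hc
  have hK' : (ζ : ℂ) ^ 2 + η ^ 2 ≠ 0 := by exact_mod_cast hK
  have hβ' : (β : ℂ) ≠ 0 := by exact_mod_cast hβ
  field_simp
  ring

theorem norm_abSolitonA_sq (x t : ℝ) :
    ‖abSolitonA α ζ η x t‖ ^ 2 =
      (4 * η) ^ 2 * (1 / cosh (2 * η * x + η * α / (2 * (ζ ^ 2 + η ^ 2)) * t)) ^ 2 := by
  rw [abSolitonA, mul_assoc Complex.I, ← Complex.ofReal_mul, norm_mul,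
    Complex.norm_exp_I_mul_ofReal, mul_one, Complex.norm_real, Real.norm_eq_abs, sq_abs]
  ring

theorem abSoliton_second_equation (x t : ℝ) :
    deriv (fun x' => abSolitonB α β ζ η x' t) x
      + (1 / (2 * β)) * deriv (fun t' => ‖abSolitonA α ζ η x t'‖ ^ 2) t = 0 := by
  simp only [abSolitonB, norm_abSolitonA_sq]
  rw [((hasDerivAt_one_div_cosh_sq _).const_mul _).comp_linear_fst.deriv,
    ((hasDerivAt_one_div_cosh_sq _).const_mul _).comp_linear_snd.deriv]
  -- `ring` can split `(β * K)⁻¹` only when `K` is an atom, not the sum `ζ ^ 2 + η ^ 2`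
  generalize ζ ^ 2 + η ^ 2 = K
  ring

end Soliton

theorem stmt1_general (α β ζ η : ℝ) (hβ : β ≠ 0) (hη : 0 < η)
    (A : ℝ → ℝ → ℂ) (B : ℝ → ℝ → ℝ)
    (hA : ∀ x t, A x t =
      (4 * η : ℝ) * (1 / Real.cosh (2 * η * (x + α * t / (4 * (ζ ^ 2 + η ^ 2))))) *
        Complex.exp (Complex.I * (ζ : ℂ) *
          ((-2 * x + α * t / (2 * (ζ ^ 2 + η ^ 2)) : ℝ) : ℂ)))
    (hB : ∀ x t, B x t =
      -(2 * α * η ^ 2 / (β * (ζ ^ 2 + η ^ 2))) *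
        (1 / Real.cosh (η * (2 * x + α * t / (2 * (ζ ^ 2 + η ^ 2))))) ^ 2) :
    (∀ x t, deriv (fun t' => deriv (fun x' => A x' t') x) t
        - (α : ℂ) * A x t - (β : ℂ) * A x t * (B x t : ℂ) = 0) ∧
    (∀ x t, deriv (fun x' => B x' t) x
        + (1 / (2 * β)) * deriv (fun t' => ‖A x t'‖ ^ 2) t = 0) := by
  have hK : ζ ^ 2 + η ^ 2 ≠ 0 := by positivity
  have hA' : A = abSolitonA α ζ η := by
    ext x t
    have hu : 2 * η * (x + α * t / (4 * (ζ ^ 2 + η ^ 2))) =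
        2 * η * x + η * α / (2 * (ζ ^ 2 + η ^ 2)) * t := by
      field_simp
      ring
    have hv : -2 * x + α * t / (2 * (ζ ^ 2 + η ^ 2)) = -2 * x + α / (2 * (ζ ^ 2 + η ^ 2)) * t := by
      ring
    rw [hA, abSolitonA, hu, hv]
    push_cast
    ring
  have hB' : B = abSolitonB α β ζ η := by
    ext x t
    rw [hB, abSolitonB]
    congr 4
    ring
  subst hA' hB'
  exact ⟨abSoliton_first_equation α β ζ η hK hβ, abSoliton_second_equation α β ζ η⟩

/-- The one-soliton solutions of the coupled dispersive AB system
(with βγ = 1) satisfy A_{xt} − αA − βAB = 0 and B_x + (1/(2β))∂_t(|A|²) = 0. -/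
theorem stmt1 (α β ζ η : ℝ) (hα : α < 0) (hβ : β ≠ 0) (hη : 0 < η)
    (A : ℝ → ℝ → ℂ) (B : ℝ → ℝ → ℝ)
    (hA : ∀ x t, A x t =
      (4 * η : ℝ) * (1 / Real.cosh (2 * η * (x + α * t / (4 * (ζ ^ 2 + η ^ 2))))) *
        Complex.exp (Complex.I * (ζ : ℂ) *
          ((-2 * x + α * t / (2 * (ζ ^ 2 + η ^ 2)) : ℝ) : ℂ)))
    (hB : ∀ x t, B x t =
      -(2 * α * η ^ 2 / (β * (ζ ^ 2 + η ^ 2))) *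
        (1 / Real.cosh (η * (2 * x + α * t / (2 * (ζ ^ 2 + η ^ 2))))) ^ 2) :
    (∀ x t, deriv (fun t' => deriv (fun x' => A x' t') x) t
        - (α : ℂ) * A x t - (β : ℂ) * A x t * (B x t : ℂ) = 0) ∧
    (∀ x t, deriv (fun x' => B x' t) x
        + (1 / (2 * β)) * deriv (fun t' => ‖A x t'‖ ^ 2) t = 0) :=
  stmt1_general α β ζ η hβ hη A B hA hB
end

section
/- For any constant c₂ > 0 and any η ∈ ℝ, ∫_0^∞ e^{−c₂ v t} / √|η − v| dv ≤ C t^{−1/2} for all t ≥ 1, where C depends only on c₂. -/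
/-!
Split the integrand according to whether `|η - v| ≤ δ`. Near the singularity the exponential
factor is at most `1`, leaving `∫_{|u| ≤ δ} |u|^{-1/2} du = 4 √δ`; away from it
`1 / √|η - v| ≤ 1 / √δ`, leaving `δ^{-1/2} ∫₀^∞ e^{-c₂ v t} dv = δ^{-1/2} / (c₂ t)`.
The choice `δ = 1 / t` balances the two contributions, both of order `t^{-1/2}`.
-/

open MeasureTheory Set Real

theorem integral_indicator_Iic_rpow_abs {r δ : ℝ} (hr : -1 < r) (hδ : 0 < δ) :
    ∫ u, (Iic δ).indicator (fun u => u ^ r) |u| = 2 * (δ ^ (r + 1) / (r + 1)) := by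
  rw [integral_comp_abs, setIntegral_indicator measurableSet_Iic, Ioi_inter_Iic,
    ← intervalIntegral.integral_of_le hδ.le, integral_rpow (Or.inl hr),
    zero_rpow (by linarith), sub_zero]

theorem integrable_indicator_Iic_rpow_abs {r δ : ℝ} (hr : -1 < r) (hδ : 0 < δ) :
    Integrable fun u => (Iic δ).indicator (fun u => u ^ r) |u| := by
  refine Integrable.of_integral_ne_zero ?_
  rw [integral_indicator_Iic_rpow_abs hr hδ]
  have : 0 < r + 1 := by linarith
  positivity

theorem div_sqrt_le_add_indicator {e w δ : ℝ} (he₀ : 0 ≤ e) (he₁ : e ≤ 1) (hw : 0 ≤ w)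
    (hδ : 0 < δ) :
    e / √w ≤ e / √δ + (Iic δ).indicator (fun u => u ^ (-(1 / 2) : ℝ)) w := by
  by_cases hwδ : w ≤ δ
  · rw [indicator_of_mem (mem_Iic.mpr hwδ), rpow_neg hw, ← sqrt_eq_rpow]
    have : e / √w ≤ (√w)⁻¹ := by
      rw [div_eq_mul_inv]
      exact mul_le_of_le_one_left (by positivity) he₁
    have : 0 ≤ e / √δ := by positivity
    linarith
  · rw [indicator_of_notMem (mt mem_Iic.mp hwδ), add_zero]
    gcongr
    linarith [not_le.mp hwδ]

theorem setIntegral_div_sqrt_abs_sub_le {f : ℝ → ℝ} {s : Set ℝ} (hs : MeasurableSet s)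
    (hf : IntegrableOn f s) (hf₀ : ∀ v ∈ s, 0 ≤ f v) (hf₁ : ∀ v ∈ s, f v ≤ 1) (η : ℝ) {δ : ℝ}
    (hδ : 0 < δ) :
    ∫ v in s, f v / √|η - v| ≤ (∫ v in s, f v) / √δ + 4 * √δ := by
  set h : ℝ → ℝ := fun u => (Iic δ).indicator (fun u => u ^ (-(1 / 2) : ℝ)) |u|
  have hh : Integrable fun v => h (η - v) :=
    (integrable_indicator_Iic_rpow_abs (by norm_num) hδ).comp_sub_left η
  have hh₀ : ∀ v, 0 ≤ h (η - v) :=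
    fun v => indicator_nonneg (fun u _ => rpow_nonneg (abs_nonneg _) _) _
  have hh_integral : ∫ v, h (η - v) = 4 * √δ := by
    rw [integral_sub_left_eq_self h, integral_indicator_Iic_rpow_abs (by norm_num) hδ,
      sqrt_eq_rpow]
    ring_nf
  calc ∫ v in s, f v / √|η - v|
      ≤ ∫ v in s, (f v / √δ + h (η - v)) := by
        refine integral_mono_of_nonneg ?_ ((hf.div_const _).add hh.integrableOn) ?_
        · exact (ae_restrict_mem hs).mono fun v hv => div_nonneg (hf₀ v hv) (sqrt_nonneg _)
        · exact (ae_restrict_mem hs).mono fun v hv =>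
            div_sqrt_le_add_indicator (hf₀ v hv) (hf₁ v hv) (abs_nonneg _) hδ
    _ = (∫ v in s, f v) / √δ + ∫ v in s, h (η - v) := by
        rw [integral_add (hf.div_const _) hh.integrableOn, integral_div]
    _ ≤ (∫ v in s, f v) / √δ + 4 * √δ := by
        grw [setIntegral_le_integral hh (.of_forall hh₀), hh_integral]

/-- ∫_0^∞ e^{−c₂vt}/√|η−v| dv ≤ C t^{−1/2} for all η ∈ ℝ, t ≥ 1,
with C depending only on c₂. -/
theorem stmt11 (c₂ : ℝ) (hc₂ : 0 < c₂) :
    ∃ C > 0, ∀ η : ℝ, ∀ t ≥ (1 : ℝ),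
      (∫ v in Set.Ioi (0 : ℝ), Real.exp (-c₂ * v * t) / Real.sqrt |η - v|)
        ≤ C * t ^ (-(1 / 2) : ℝ) := by
  refine ⟨1 / c₂ + 4, by positivity, fun η t ht => ?_⟩
  have ht₀ : 0 < t := by linarith
  have hexp : ∀ v, exp (-c₂ * v * t) = exp (-(c₂ * t) * v) := fun v => by ring_nf
  have hrate : -(c₂ * t) < 0 := by nlinarith
  have hint : IntegrableOn (fun v => exp (-c₂ * v * t)) (Ioi 0) := by
    simpa only [hexp] using integrableOn_exp_mul_Ioi hrate 0
  have hle_one : ∀ v ∈ Ioi (0 : ℝ), exp (-c₂ * v * t) ≤ 1 := fun v hv => by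
    rw [hexp, exp_le_one_iff]
    nlinarith [mem_Ioi.mp hv]
  have hval : ∫ v in Ioi (0 : ℝ), exp (-c₂ * v * t) = 1 / (c₂ * t) := by
    simp only [hexp, integral_exp_mul_Ioi hrate, mul_zero, exp_zero]
    field_simp
  have hsqrt : √(1 / t) = t ^ (-(1 / 2) : ℝ) := by
    rw [sqrt_eq_rpow, one_div, inv_rpow ht₀.le, rpow_neg ht₀.le]
  have hsq : t ^ (-(1 / 2) : ℝ) * t ^ (-(1 / 2) : ℝ) = 1 / t := by
    rw [← rpow_add ht₀]; norm_num [rpow_neg_one]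
  have hbound := setIntegral_div_sqrt_abs_sub_le measurableSet_Ioi hint
    (fun v _ => (exp_pos _).le) hle_one η (one_div_pos.mpr ht₀)
  rw [hval, hsqrt, show 1 / (c₂ * t) = t ^ (-(1 / 2) : ℝ) * t ^ (-(1 / 2) : ℝ) / c₂ by
    rw [hsq]; ring] at hbound
  refine hbound.trans_eq ?_
  field_simp
end

section
/- For η > 0, p > 2 and q with 1/p + 1/q = 1 and c₁ > 0, the integral ∫_0^η v^{1/p − 1/2}(η − v)^{1/q − 1} e^{−c₁ v² t} dv satisfies the bound ≤ C t^{−1/4} for all t ≥ 1, where C is independent of η and t. -/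
/-!
Since `e^{-x} ≤ x^{-1/4}` for `x > 0`, the Gaussian factor is at most `(c₁ t)^{-1/4} v^{-1/2}`,
which turns the integrand into `(c₁ t)^{-1/4}` times the Beta kernel `v^{α-1} (η-v)^{β-1}` with
`α = 1/p`, `β = 1/q`. As `α + β = 1`, the integral of that kernel over `(0, η)` is `B(α, β)`,
independently of `η`.
-/

open MeasureTheory Set Real

namespace Real

theorem rpow_le_exp {s x : ℝ} (hs0 : 0 ≤ s) (hs1 : s ≤ 1) (hx : 0 ≤ x) : x ^ s ≤ exp x := by
  rcases le_total x 1 with h | h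
  · exact (rpow_le_one hx h hs0).trans (one_le_exp hx)
  · calc x ^ s ≤ x ^ (1 : ℝ) := rpow_le_rpow_of_exponent_le h hs1
      _ = x := rpow_one x
      _ ≤ exp x := by linarith [add_one_le_exp x]

theorem exp_neg_le_rpow_neg {s x : ℝ} (hs0 : 0 ≤ s) (hs1 : s ≤ 1) (hx : 0 < x) :
    exp (-x) ≤ x ^ (-s) := by
  rw [exp_neg, rpow_neg hx.le]
  exact inv_anti₀ (rpow_pos_of_pos hx s) (rpow_le_exp hs0 hs1 hx.le)

theorem exp_neg_mul_sq_mul_le {s c t v : ℝ} (hs0 : 0 ≤ s) (hs1 : s ≤ 1) (hc : 0 < c)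
    (ht : 0 < t) (hv : 0 < v) :
    exp (-c * v ^ 2 * t) ≤ (c * t) ^ (-s) * v ^ (-2 * s) := by
  calc exp (-c * v ^ 2 * t) = exp (-(c * t * v ^ 2)) := by ring_nf
    _ ≤ (c * t * v ^ 2) ^ (-s) := exp_neg_le_rpow_neg hs0 hs1 (by positivity)
    _ = (c * t) ^ (-s) * v ^ (-2 * s) := by
        rw [mul_rpow (by positivity) (by positivity), ← rpow_natCast, ← rpow_mul hv.le]
        ring_nf

theorem rpow_mul_mul_exp_neg_mul_sq_mul_le {α w c t v : ℝ} (hc : 0 < c) (ht : 0 < t)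
    (hv : 0 < v) (hw : 0 ≤ w) :
    v ^ (α - 1 / 2) * w * exp (-c * v ^ 2 * t) ≤ (c * t) ^ (-(1 / 4) : ℝ) * (v ^ (α - 1) * w) :=
  calc _ ≤ v ^ (α - 1 / 2) * w * ((c * t) ^ (-(1 / 4) : ℝ) * v ^ (-2 * (1 / 4) : ℝ)) := by
        gcongr
        exact exp_neg_mul_sq_mul_le (by norm_num) (by norm_num) hc ht hv
    _ = _ := by
        rw [show α - 1 = (α - 1 / 2) + (-2 * (1 / 4)) by ring, rpow_add hv]
        ring

end Real

theorem intervalIntegrable_rpow_mul_rpow_sub_half {α a : ℝ} (hα : 0 < α) (β : ℝ) (ha : 0 < a) :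
    IntervalIntegrable (fun x => x ^ (α - 1) * (a - x) ^ (β - 1)) volume 0 (a / 2) := by
  refine (intervalIntegral.intervalIntegrable_rpow' (by linarith)).mul_continuousOn ?_
  intro x hx
  rw [uIcc_of_le (by positivity)] at hx
  have hax : a - x ≠ 0 := by linarith [hx.2]
  exact (ContinuousAt.rpow_const (by fun_prop) (Or.inl hax)).continuousWithinAt

theorem intervalIntegrable_rpow_mul_rpow_sub {α β a : ℝ} (hα : 0 < α) (hβ : 0 < β) (ha : 0 < a) :
    IntervalIntegrable (fun x => x ^ (α - 1) * (a - x) ^ (β - 1)) volume 0 a := by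
  refine (intervalIntegrable_rpow_mul_rpow_sub_half hα β ha).trans ?_
  have h := ((intervalIntegrable_rpow_mul_rpow_sub_half hβ α ha).comp_sub_left a).symm
  simpa only [sub_zero, sub_sub_cancel, sub_half, mul_comm] using h

theorem rpow_mul_rpow_sub_eq_rpow_mul_div {α β a x : ℝ} (ha : 0 < a) (hx0 : 0 ≤ x)
    (hxa : x ≤ a) :
    x ^ (α - 1) * (a - x) ^ (β - 1) =
      a ^ (α + β - 2) * ((x / a) ^ (α - 1) * (1 - x / a) ^ (β - 1)) := by
  rw [show 1 - x / a = (a - x) / a by field_simp, div_rpow hx0 ha.le,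
    div_rpow (by linarith) ha.le, show α + β - 2 = (α - 1) + (β - 1) by ring, rpow_add ha]
  field_simp

theorem integral_rpow_mul_rpow_sub {α β a : ℝ} (ha : 0 < a) :
    ∫ x in (0 : ℝ)..a, x ^ (α - 1) * (a - x) ^ (β - 1) =
      a ^ (α + β - 1) * ∫ x in (0 : ℝ)..1, x ^ (α - 1) * (1 - x) ^ (β - 1) := by
  have hscale := intervalIntegral.integral_comp_div
    (fun y : ℝ => y ^ (α - 1) * (1 - y) ^ (β - 1)) ha.ne' (a := 0) (b := a)
  rw [zero_div, div_self ha.ne', smul_eq_mul] at hscale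
  rw [intervalIntegral.integral_congr (g := fun x => a ^ (α + β - 2) *
      ((x / a) ^ (α - 1) * (1 - x / a) ^ (β - 1))) fun x hx => by
      rw [uIcc_of_le ha.le] at hx
      exact rpow_mul_rpow_sub_eq_rpow_mul_div ha hx.1 hx.2,
    intervalIntegral.integral_const_mul, hscale, ← mul_assoc, ← rpow_add_one ha.ne']
  ring_nf

/-- For p > 2, 1/p + 1/q = 1 and c₁ > 0, the integral
∫_0^η v^{1/p−1/2}(η−v)^{1/q−1} e^{−c₁v²t} dv is ≤ C t^{−1/4} for all t ≥ 1,
uniformly in η > 0. -/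
theorem stmt13 (p q c₁ : ℝ) (hp : 2 < p) (hpq : 1 / p + 1 / q = 1) (hc₁ : 0 < c₁) :
    ∃ C > 0, ∀ η > (0 : ℝ), ∀ t ≥ (1 : ℝ),
      (∫ v in Set.Ioo 0 η,
          v ^ (1 / p - 1 / 2) * (η - v) ^ (1 / q - 1) * Real.exp (-c₁ * v ^ 2 * t))
        ≤ C * t ^ (-(1 / 4) : ℝ) := by
  have hα : 0 < 1 / p := by positivity
  have hβ : 0 < 1 - 1 / p := by
    rw [sub_pos, div_lt_one (by linarith)]; linarith
  rw [show 1 / q = 1 - 1 / p by linarith]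
  set B := ∫ x in (0 : ℝ)..1, x ^ (1 / p - 1) * (1 - x) ^ (1 - 1 / p - 1)
  have hB : 0 ≤ B := intervalIntegral.integral_nonneg zero_le_one fun x hx =>
    mul_nonneg (rpow_nonneg hx.1 _) (rpow_nonneg (by linarith [hx.2]) _)
  refine ⟨c₁ ^ (-(1 / 4) : ℝ) * (B + 1), mul_pos (rpow_pos_of_pos hc₁ _) (by linarith),
    fun η hη t ht => ?_⟩
  have ht0 : 0 < t := by linarith
  have hkernel := intervalIntegrable_rpow_mul_rpow_sub hα hβ hη
  rw [intervalIntegrable_iff_integrableOn_Ioo_of_le hη.le] at hkernel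
  calc _ ≤ ∫ v in Ioo 0 η, (c₁ * t) ^ (-(1 / 4) : ℝ) *
          (v ^ (1 / p - 1) * (η - v) ^ (1 - 1 / p - 1)) := by
        refine integral_mono_of_nonneg ?_ (hkernel.const_mul _) ?_ <;>
          filter_upwards [ae_restrict_mem measurableSet_Ioo] with v ⟨hv, hvη⟩
        · have := sub_pos.2 hvη
          positivity
        · exact rpow_mul_mul_exp_neg_mul_sq_mul_le hc₁ ht0 hv (rpow_nonneg (by linarith) _)
    _ = (c₁ * t) ^ (-(1 / 4) : ℝ) * B := by
        rw [integral_const_mul, ← integral_Ioc_eq_integral_Ioo,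
          ← intervalIntegral.integral_of_le hη.le, integral_rpow_mul_rpow_sub hη,
          show 1 / p + (1 - 1 / p) - 1 = 0 by ring, rpow_zero, one_mul]
    _ ≤ c₁ ^ (-(1 / 4) : ℝ) * (B + 1) * t ^ (-(1 / 4) : ℝ) := by
        rw [mul_rpow hc₁.le ht0.le, mul_right_comm]
        gcongr
        linarith
end

section
/- For ν ∈ ℝ, the Weber (parabolic cylinder) coefficients Ξ₁₂ = √(2π) e^{iπ/4} e^{−πν/2} / (r₀ Γ(−iν)) and Ξ₂₁ = −√(2π) e^{−iπ/4} e^{−πν/2} / (conj(r₀) Γ(iν)) satisfy Ξ₁₂ · Ξ₂₁ = ν, provided r₀ ∈ ℂ \ {0} and ν = −(1/(2π)) log(1 + |r₀|²). -/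
/-! The reflection formula gives `Γ(iν) Γ(-iν) = π / (ν sinh πν)`, so
`Ξ₁₂ Ξ₂₁ = -2π e^{-πν} / (|r₀|² Γ(iν) Γ(-iν)) = ν (e^{-2πν} - 1) / |r₀|²`,
and the choice of `ν` is exactly `e^{-2πν} - 1 = |r₀|²`. -/

open Complex
open scoped Real

noncomputable def weberXi₁₂ (r₀ : ℂ) (ν : ℝ) : ℂ :=
  (Real.sqrt (2 * π) : ℂ) * exp (I * π / 4) * (Real.exp (-π * ν / 2) : ℂ) /
    (r₀ * Gamma (-I * ν))

noncomputable def weberXi₂₁ (r₀ : ℂ) (ν : ℝ) : ℂ :=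
  -((Real.sqrt (2 * π) : ℂ) * exp (-I * π / 4) * (Real.exp (-π * ν / 2) : ℂ)) /
    (starRingEnd ℂ r₀ * Gamma (I * ν))

namespace Complex

theorem Gamma_mul_Gamma_neg (z : ℂ) : Gamma z * Gamma (-z) = -π / (z * sin (π * z)) := by
  rcases eq_or_ne z 0 with rfl | hz
  · simp
  have hreflection := Gamma_mul_Gamma_one_sub z
  rw [show 1 - z = -z + 1 by ring, Gamma_add_one _ (neg_ne_zero.mpr hz)] at hreflection
  calc Gamma z * Gamma (-z) = Gamma z * (-z * Gamma (-z)) / -z := by field_simp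
    _ = -π / (z * sin (π * z)) := by rw [hreflection]; ring

theorem Gamma_I_mul_mul_Gamma_neg_I_mul (y : ℝ) :
    Gamma (I * y) * Gamma (-I * y) = ((π / (y * Real.sinh (π * y)) : ℝ) : ℂ) := by
  rw [neg_mul, Gamma_mul_Gamma_neg, show (π : ℂ) * (I * y) = ((π * y : ℝ) : ℂ) * I by push_cast; ring,
    sin_mul_I, ← ofReal_sinh]
  push_cast
  ring_nf
  rw [inv_I, neg_sq, I_sq]
  ring

end Complex

theorem Real.neg_two_mul_exp_neg_mul_sinh (x : ℝ) :
    -2 * Real.exp (-x) * Real.sinh x = Real.exp (-(2 * x)) - 1 := by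
  rw [Real.sinh_eq, show -(2 * x) = -x + -x by ring, Real.exp_add]
  ring_nf
  rw [← Real.exp_add]
  simp

theorem weberXi₁₂_mul_weberXi₂₁ (r₀ : ℂ) (ν : ℝ) :
    weberXi₁₂ r₀ ν * weberXi₂₁ r₀ ν = ((ν * (Real.exp (-(2 * π * ν)) - 1) / ‖r₀‖ ^ 2 : ℝ) : ℂ) := by
  have hprefactor : (Real.sqrt (2 * π) : ℂ) * exp (I * π / 4) * (Real.exp (-π * ν / 2) : ℂ) *
      ((Real.sqrt (2 * π) : ℂ) * exp (-I * π / 4) * (Real.exp (-π * ν / 2) : ℂ)) =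
      ((2 * π * Real.exp (-(π * ν)) : ℝ) : ℂ) := by
    calc _ = ((Real.sqrt (2 * π) * Real.sqrt (2 * π) *
            (Real.exp (-π * ν / 2) * Real.exp (-π * ν / 2)) : ℝ) : ℂ) *
          (exp (I * π / 4) * exp (-I * π / 4)) := by push_cast; ring
      _ = _ := by
        rw [← exp_add, ← Real.exp_add, Real.mul_self_sqrt (by positivity)]
        ring_nf
        simp
  calc weberXi₁₂ r₀ ν * weberXi₂₁ r₀ ν
      = -((Real.sqrt (2 * π) : ℂ) * exp (I * π / 4) * (Real.exp (-π * ν / 2) : ℂ) *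
          ((Real.sqrt (2 * π) : ℂ) * exp (-I * π / 4) * (Real.exp (-π * ν / 2) : ℂ))) /
          ((r₀ * starRingEnd ℂ r₀) * (Gamma (I * ν) * Gamma (-I * ν))) := by
        unfold weberXi₁₂ weberXi₂₁; ring
    _ = ((-(2 * π * Real.exp (-(π * ν))) / (‖r₀‖ ^ 2 * (π / (ν * Real.sinh (π * ν)))) : ℝ) : ℂ) := by
        rw [hprefactor, mul_conj, Gamma_I_mul_mul_Gamma_neg_I_mul, normSq_eq_norm_sq]
        push_cast
        rfl
    _ = _ := by
        congr 1
        rw [mul_assoc 2 π ν, ← Real.neg_two_mul_exp_neg_mul_sinh]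
        field_simp

/-- The parabolic cylinder coefficients Ξ₁₂, Ξ₂₁ satisfy
Ξ₁₂·Ξ₂₁ = ν where ν = −(1/(2π)) log(1+|r₀|²), r₀ ≠ 0. -/
theorem stmt19 (r₀ : ℂ) (hr₀ : r₀ ≠ 0) (ν : ℝ)
    (hν : ν = -(1 / (2 * Real.pi)) * Real.log (1 + ‖r₀‖ ^ 2)) :
    ((Real.sqrt (2 * Real.pi) : ℂ) * Complex.exp (Complex.I * Real.pi / 4) *
        (Real.exp (-Real.pi * ν / 2) : ℂ) / (r₀ * Complex.Gamma (-Complex.I * ν))) *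
      (-((Real.sqrt (2 * Real.pi) : ℂ) * Complex.exp (-Complex.I * Real.pi / 4) *
        (Real.exp (-Real.pi * ν / 2) : ℂ)) /
          (starRingEnd ℂ r₀ * Complex.Gamma (Complex.I * ν)))
      = (ν : ℂ) := by
  have hexp : Real.exp (-(2 * π * ν)) = 1 + ‖r₀‖ ^ 2 := by
    rw [hν, show -(2 * π * (-(1 / (2 * π)) * Real.log (1 + ‖r₀‖ ^ 2))) = Real.log (1 + ‖r₀‖ ^ 2) by
      field_simp]
    exact Real.exp_log (by positivity)
  change weberXi₁₂ r₀ ν * weberXi₂₁ r₀ ν = ν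
  rw [weberXi₁₂_mul_weberXi₂₁, hexp, add_sub_cancel_left, mul_div_assoc,
    div_self (pow_ne_zero 2 (norm_ne_zero_iff.mpr hr₀)), mul_one]
end
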